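/- Let Ξ ⊆ ℝ^n_+ be a nonempty convex set, let ξ̂_1,…,ξ̂_N ∈ Ξ and ξ̄ ∈ Ξ, let q ∈ [1,∞], ε ≥ 0, l ∈ {1,…,N}, α ∈ ((l−1)/N, l/N], and let c ≥ 1 satisfy ‖ξ̄ − ξ̂_i‖_q ≤ c ε N / l for all i. Define the distorted realizations ξ'_i = ξ̂_i + (ξ̄ − ξ̂_i)/c. Then for every x ∈ {0,1}^n, CVaR^α(ξ'_1ᵀx,…,ξ'_Nᵀx) ≤ max over (ξ_1,…,ξ_N) ∈ Ξ^N with Σ_{i=1}^N ‖ξ_i − ξ̂_i‖_q ≤ Nε of CVaR^α(ξ_1ᵀx,…,ξ_Nᵀx); that is, the CVaR under the distorted empirical distribution is a lower bound on the worst-case CVaR over the ambiguity set. -/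
import Mathlib


open scoped BigOperators ENNReal

/-- Conditional Value at Risk of the values `c 1, …, c N` at risk level `α`:
`CVaR^α(c) = inf_{t ∈ ℝ} ( t + (1/(α N)) Σ_i max(c i − t, 0) )`. -/
noncomputable def cvar (N : ℕ) (α : ℝ) (c : Fin N → ℝ) : ℝ :=
  ⨅ t : ℝ, (t + 1 / (α * N) * ∑ i, max (c i - t) 0)

/-- The `q`-norm on `ℝ^n`, for an exponent `q ∈ [1,∞]` (represented as `ℝ≥0∞`). -/
noncomputable def qnorm {n : ℕ} (q : ℝ≥0∞) (v : Fin n → ℝ) : ℝ :=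
  if q = ⊤ then ⨆ i, |v i| else (∑ i, |v i| ^ q.toReal) ^ (1 / q.toReal)

lemma toReal_one_le {q : ℝ≥0∞} (hq : 1 ≤ q) (h : q ≠ ⊤) : (1:ℝ) ≤ q.toReal := by
  have := ENNReal.toReal_mono h hq
  simpa using this

lemma qnorm_nonneg {n : ℕ} (q : ℝ≥0∞) (v : Fin n → ℝ) : 0 ≤ qnorm q v := by
  unfold qnorm
  split
  · exact Real.iSup_nonneg fun i => abs_nonneg _
  · exact Real.rpow_nonneg (Finset.sum_nonneg fun i _ => Real.rpow_nonneg (abs_nonneg _) _) _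

lemma qnorm_zero {n : ℕ} (q : ℝ≥0∞) (hq : 1 ≤ q) : qnorm q (fun _ : Fin n => (0:ℝ)) = 0 := by
  unfold qnorm
  split
  · simp [Real.iSup_const_zero]
  · rename_i h
    have hp : (1:ℝ) ≤ q.toReal := toReal_one_le hq h
    have hp0 : q.toReal ≠ 0 := by linarith
    simp [Real.zero_rpow hp0, Real.zero_rpow (inv_ne_zero hp0)]

lemma qnorm_div_le {n : ℕ} (q : ℝ≥0∞) (hq : 1 ≤ q) {c : ℝ} (hc : 0 < c) (v : Fin n → ℝ) :
    qnorm q (fun j => v j / c) ≤ qnorm q v / c := by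
  unfold qnorm
  split
  · rcases isEmpty_or_nonempty (Fin n) with he | hne
    · simp [Real.iSup_of_isEmpty]
    · refine ciSup_le fun j => ?_
      rw [abs_div, abs_of_pos hc, div_le_div_iff_of_pos_right hc]
      exact le_ciSup (f := fun i => |v i|) (Set.Finite.bddAbove (Set.finite_range _)) j
  · rename_i h
    have hp : (1:ℝ) ≤ q.toReal := toReal_one_le hq h
    have hp0 : q.toReal ≠ 0 := by linarith
    have e1 : ∀ j : Fin n, |v j / c| ^ q.toReal = |v j| ^ q.toReal / c ^ q.toReal := by
      intro j
      rw [abs_div, abs_of_pos hc, Real.div_rpow (abs_nonneg _) hc.le]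
    simp only [e1]
    rw [← Finset.sum_div,
      Real.div_rpow (Finset.sum_nonneg fun i _ => Real.rpow_nonneg (abs_nonneg _) _)
       (Real.rpow_nonneg hc.le _), ← Real.rpow_mul hc.le, mul_one_div_cancel hp0,
      Real.rpow_one]

lemma exists_top_finset {N : ℕ} (v : Fin N → ℝ) (l : ℕ) (hl : l ≤ N) :
    ∃ S : Finset (Fin N), S.card = l ∧ ∀ i ∈ S, ∀ j, j ∉ S → v j ≤ v i := by
  induction l with
  | zero => exact ⟨∅, rfl, by simp⟩
  | succ k ih =>
    obtain ⟨S, hcard, hS⟩ := ih (by omega)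
    have hne : (Sᶜ : Finset (Fin N)).Nonempty := by
      rw [← Finset.card_pos, Finset.card_compl, hcard, Fintype.card_fin]; omega
    obtain ⟨j, hjmem, hjmax⟩ := Finset.exists_max_image Sᶜ v hne
    refine ⟨insert j S, ?_, ?_⟩
    · rw [Finset.card_insert_of_notMem (Finset.mem_compl.mp hjmem), hcard]
    · intro i hi j' hj'
      rcases Finset.mem_insert.mp hi with rfl | hiS
      · exact hjmax j' (Finset.mem_compl.mpr fun h => hj' (Finset.mem_insert_of_mem h))
      · exact hS i hiS j' fun h => hj' (Finset.mem_insert_of_mem h)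

/-- For a convex support set `Ξ ⊆ ℝ^n_+`, `ξ̄ ∈ Ξ`, `c ≥ 1` with `‖ξ̄ − ξ̂_i‖_q ≤ cεN/l`,
and distorted realizations `ξ'_i = ξ̂_i + (ξ̄ − ξ̂_i)/c`: for every binary `x`, the CVaR
under the distorted empirical distribution is a lower bound on the worst-case CVaR over the
ambiguity set, i.e. it is at most some value attained over the ambiguity set. -/
theorem stmt_12 (n N : ℕ) (hN : 0 < N)
    (Ξ : Set (Fin n → ℝ)) (hΞne : Ξ.Nonempty) (hconv : Convex ℝ Ξ)
    (hpos : ∀ ξ ∈ Ξ, ∀ j, 0 ≤ ξ j)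
    (ξh : Fin N → Fin n → ℝ) (hξh : ∀ i, ξh i ∈ Ξ)
    (ξbar : Fin n → ℝ) (hξbar : ξbar ∈ Ξ)
    (q : ℝ≥0∞) (hq : 1 ≤ q) (ε : ℝ) (hε : 0 ≤ ε)
    (l : ℕ) (hl1 : 1 ≤ l) (hlN : l ≤ N)
    (α : ℝ) (hαl : ((l : ℝ) - 1) / N < α) (hαu : α ≤ (l : ℝ) / N)
    (c : ℝ) (hc : 1 ≤ c)
    (hcbound : ∀ i, qnorm q (fun j => ξbar j - ξh i j) ≤ c * ε * N / l)
    (x : Fin n → ℝ) (hx : ∀ j, x j = 0 ∨ x j = 1) :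
    ∃ y ∈ {y : ℝ | ∃ ξ : Fin N → Fin n → ℝ, (∀ i, ξ i ∈ Ξ) ∧
        (∑ i, qnorm q (fun j => ξ i j - ξh i j)) ≤ N * ε ∧
        y = cvar N α (fun i => ∑ j, ξ i j * x j)},
      cvar N α (fun i => ∑ j, (ξh i j + (ξbar j - ξh i j) / c) * x j) ≤ y := by
  classical
  have hc0 : (0:ℝ) < c := lt_of_lt_of_le one_pos hc
  have hNpos : (0:ℝ) < N := by exact_mod_cast hN
  have hlpos : (0:ℝ) < l := by exact_mod_cast hl1
  have hl1' : (1:ℝ) ≤ l := by exact_mod_cast hl1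
  have hα : 0 < α := lt_of_le_of_lt (div_nonneg (by linarith) hNpos.le) hαl
  have hα1 : α ≤ 1 := hαu.trans (by rw [div_le_one hNpos]; exact_mod_cast hlN)
  have hαN : 0 < α * N := mul_pos hα hNpos
  have hαNl : α * N ≤ l := (le_div_iff₀ hNpos).mp hαu
  set v : Fin N → ℝ := fun i => ∑ j, (ξh i j + (ξbar j - ξh i j) / c) * x j with hv
  obtain ⟨S, hScard, hStop⟩ := exists_top_finset v l hlN
  have hSne : S.Nonempty := Finset.card_pos.mp (by rw [hScard]; exact hl1)
  set ξ : Fin N → Fin n → ℝ :=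
    fun i => if i ∈ S then (fun j => ξh i j + (ξbar j - ξh i j) / c) else ξh i with hξdef
  have hmem : ∀ i, ξ i ∈ Ξ := by
    intro i
    by_cases hi : i ∈ S
    · simp only [hξdef, hi, if_pos]
      have key : (fun j => ξh i j + (ξbar j - ξh i j) / c)
          = (1 - 1/c) • ξh i + (1/c) • ξbar := by
        funext j
        simp only [Pi.add_apply, Pi.smul_apply, smul_eq_mul]
        field_simp
        ring
      rw [key]
      exact hconv (hξh i) hξbar (by rw [sub_nonneg, div_le_one hc0]; exact hc)
        (by positivity) (by ring)
    · simpa [hξdef, hi] using hξh i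
  have hcost : (∑ i, qnorm q (fun j => ξ i j - ξh i j)) ≤ N * ε := by
    have hsplit : (∑ i, qnorm q (fun j => ξ i j - ξh i j))
        = ∑ i ∈ S, qnorm q (fun j => ξ i j - ξh i j) := by
      rw [← Finset.sum_add_sum_compl S]
      have : ∑ i ∈ Sᶜ, qnorm q (fun j => ξ i j - ξh i j) = 0 := by
        refine Finset.sum_eq_zero fun i hi => ?_
        have hiS : i ∉ S := Finset.mem_compl.mp hi
        simp only [hξdef, hiS, if_neg, not_false_iff, sub_self]
        exact qnorm_zero q hq
      rw [this, add_zero]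
    rw [hsplit]
    have hterm : ∀ i ∈ S, qnorm q (fun j => ξ i j - ξh i j) ≤ ε * N / l := by
      intro i hi
      have : (fun j => ξ i j - ξh i j) = fun j => (ξbar j - ξh i j) / c := by
        funext j; simp [hξdef, hi]
      rw [this]
      calc qnorm q (fun j => (ξbar j - ξh i j) / c)
          ≤ qnorm q (fun j => ξbar j - ξh i j) / c := qnorm_div_le q hq hc0 _
        _ ≤ (c * ε * N / l) / c := by
            apply div_le_div_of_nonneg_right (hcbound i) hc0.le
        _ = ε * N / l := by field_simp
    calc (∑ i ∈ S, qnorm q (fun j => ξ i j - ξh i j)) ≤ ∑ i ∈ S, ε * N / l :=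
          Finset.sum_le_sum hterm
      _ = l * (ε * N / l) := by rw [Finset.sum_const, hScard]; ring
      _ = N * ε := by field_simp
  refine ⟨cvar N α (fun i => ∑ j, ξ i j * x j), ⟨ξ, hmem, hcost, rfl⟩, ?_⟩
  -- the CVaR comparison
  set w : Fin N → ℝ := fun i => ∑ j, ξ i j * x j with hw
  have hwv : ∀ i ∈ S, w i = v i := by
    intro i hi
    simp only [hw, hv, hξdef, hi, if_pos]
  set m : ℝ := S.inf' hSne v with hm
  have hmle : ∀ i ∈ S, m ≤ v i := fun i hi => Finset.inf'_le v hi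
  have hout : ∀ i, i ∉ S → v i ≤ m := by
    intro i hi
    obtain ⟨i₀, hi₀, hmin⟩ := S.exists_mem_eq_inf' hSne v
    rw [hm, hmin]
    exact hStop i₀ hi₀ i hi
  -- bounded below
  have hbdd : BddBelow (Set.range fun t : ℝ => t + 1 / (α * N) * ∑ i, max (v i - t) 0) := by
    refine ⟨min 0 ((∑ i, v i) / (α * N)), ?_⟩
    rintro _ ⟨s, rfl⟩
    have hsum0 : (0:ℝ) ≤ ∑ i, max (v i - s) 0 :=
      Finset.sum_nonneg fun i _ => le_max_right _ _
    rcases le_or_gt 0 s with hs | hs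
    · have : (0:ℝ) ≤ s + 1 / (α * N) * ∑ i, max (v i - s) 0 := by positivity
      exact (min_le_left _ _).trans this
    · refine (min_le_right _ _).trans ?_
      have hP : (∑ i, v i) - N * s ≤ ∑ i, max (v i - s) 0 := by
        have : ∀ i ∈ Finset.univ, v i - s ≤ max (v i - s) 0 := fun i _ => le_max_left _ _
        calc (∑ i, v i) - N * s = ∑ i : Fin N, (v i - s) := by
              rw [Finset.sum_sub_distrib, Finset.sum_const, Finset.card_univ,
                Fintype.card_fin, nsmul_eq_mul]
          _ ≤ _ := Finset.sum_le_sum this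
      rw [div_le_iff₀ hαN]
      have e : (s + 1 / (α * N) * ∑ i, max (v i - s) 0) * (α * N)
          = s * (α * N) + ∑ i, max (v i - s) 0 := by
        field_simp
      rw [e]
      have hαNN : α * N ≤ N := by nlinarith
      nlinarith [mul_nonneg (neg_nonneg.mpr hs.le) (sub_nonneg.mpr hαNN)]
  -- main inequality
  show cvar N α v ≤ cvar N α w
  unfold cvar
  refine le_ciInf fun t => ?_
  set t₀ : ℝ := max t m with ht₀
  have step1 : (⨅ s : ℝ, (s + 1 / (α * N) * ∑ i, max (v i - s) 0))
      ≤ t₀ + 1 / (α * N) * ∑ i, max (v i - t₀) 0 := ciInf_le hbdd t₀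
  refine step1.trans ?_
  -- sums restricted to S
  have hvsum : (∑ i, max (v i - t₀) 0) = ∑ i ∈ S, max (v i - t₀) 0 := by
    rw [← Finset.sum_add_sum_compl S]
    have : ∑ i ∈ Sᶜ, max (v i - t₀) 0 = 0 := by
      refine Finset.sum_eq_zero fun i hi => ?_
      have := hout i (Finset.mem_compl.mp hi)
      rw [max_eq_right]
      linarith [le_max_right t m]
    rw [this, add_zero]
  have hwsum : (∑ i ∈ S, max (v i - t) 0) ≤ ∑ i, max (w i - t) 0 := by
    calc (∑ i ∈ S, max (v i - t) 0) = ∑ i ∈ S, max (w i - t) 0 :=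
          Finset.sum_congr rfl fun i hi => by rw [hwv i hi]
      _ ≤ _ := Finset.sum_le_sum_of_subset_of_nonneg (Finset.subset_univ S)
          (fun i _ _ => le_max_right _ _)
  have key : t₀ + 1 / (α * N) * ∑ i ∈ S, max (v i - t₀) 0
      ≤ t + 1 / (α * N) * ∑ i ∈ S, max (v i - t) 0 := by
    rcases le_or_gt m t with hmt | htm
    · rw [ht₀, max_eq_left hmt]
    · rw [ht₀, max_eq_right htm.le]
      have e1 : (∑ i ∈ S, max (v i - t) 0) = ∑ i ∈ S, (v i - t) :=
        Finset.sum_congr rfl fun i hi => max_eq_left (by linarith [hmle i hi])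
      have e2 : (∑ i ∈ S, max (v i - m) 0) = ∑ i ∈ S, (v i - m) :=
        Finset.sum_congr rfl fun i hi => max_eq_left (by linarith [hmle i hi])
      rw [e1, e2]
      simp only [Finset.sum_sub_distrib, Finset.sum_const, hScard, nsmul_eq_mul]
      have hrl : (1:ℝ) ≤ 1 / (α * N) * l := by
        rw [div_mul_eq_mul_div, le_div_iff₀ hαN, one_mul, one_mul]
        exact hαNl
      nlinarith [mul_nonneg (sub_nonneg.mpr hrl) (sub_nonneg.mpr htm.le)]
  rw [hvsum]
  exact key.trans (by
    have : 1 / (α * N) * (∑ i ∈ S, max (v i - t) 0) ≤ 1 / (α * N) * ∑ i, max (w i - t) 0 :=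
      mul_le_mul_of_nonneg_left hwsum (by positivity)
    linarith)
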